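/- arXiv:1809.06737 — 2 statements merged into one kernel-verified Lean document; each statement's English description precedes it below -/
import Mathlib

section
/- Let (X,T) be a distal minimal topological dynamical system, let d ≥ 1 be an integer, and let π : (X,T) → (Z,S) be the factor map onto the maximal (d−1)-step pro-nilfactor of X. Then Q^{[d]}(X) = (π^{[d]})^{-1}(Q^{[d]}(Z)), where Q^{[d]}(Z) is the dynamical parallelepiped of the system (Z,S). -/
/-!
For a factor map `π`, `π^{[d]}` maps `Q^{[d]}(X)` onto `Q^{[d]}(Z)`, so it suffices to show that
a point of `Q^{[d]}(X)` stays in `Q^{[d]}(X)` when one coordinate is replaced by a point of the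
same `π`-fibre. As `X` is minimal and distal, the enveloping semigroup of the face
transformations and the diagonal transformation of `X^{[d]}` is a group (its only idempotent is
the identity) whose orbit of any diagonal point is `Q^{[d]}(X)`. Its elements preserve the
fibres of `π`, which are the `RP^{[d-1]}`-classes, so pulling the cube back to the diagonal by
this group turns the replacement into the following claim: if
`(x, y) ∈ RP^{[d-1]}(X)`, the cube with `y` at one vertex and `x` elsewhere lies in
`Q^{[d]}(X)`. That cube is obtained from a limit of cubes built from the witnesses of regional
proximality, whose bottom face is then straightened to the diagonal, again by the group.
-/

open Set

/-- The group of self-homeomorphisms of a topological space,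
with `(f * g) x = f (g x)`. -/
instance homeomorphGroup {X : Type*} [TopologicalSpace X] : Group (X ≃ₜ X) where
  mul f g := g.trans f
  one := Homeomorph.refl X
  inv := Homeomorph.symm
  mul_assoc f g h := rfl
  one_mul f := by ext x; rfl
  mul_one f := by ext x; rfl
  inv_mul_cancel f := by ext x; exact f.symm_apply_apply x

/-- `n · ε = n₁ε₁ + ⋯ + n_dε_d`. -/
def nDot {d : ℕ} (n : Fin d → ℤ) (ε : Fin d → Bool) : ℤ :=
  ∑ i, if ε i then n i else 0

/-- The vertex `(0,…,0)` of the cube `{0,1}^d`. -/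
def v0 (d : ℕ) : Fin d → Bool := fun _ => false

/-- A topological dynamical system `(X,T)` is minimal if every orbit is dense. -/
def IsMinimalTDS {X : Type*} [TopologicalSpace X] (T : X ≃ₜ X) : Prop :=
  ∀ x : X, Dense (Set.range fun n : ℤ => (T ^ n) x)

/-- The dynamical parallelepiped `Q^{[d]}(X)`: the closure in `X^{[d]} = X^({0,1}^d)`
of the set of points `(T^{n·ε} x)_{ε ∈ {0,1}^d}`, `x ∈ X`, `n ∈ ℤ^d`. -/
def cubeQ {X : Type*} [TopologicalSpace X] (T : X ≃ₜ X) (d : ℕ) :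
    Set ((Fin d → Bool) → X) :=
  closure {y | ∃ (x : X) (n : Fin d → ℤ), y = fun ε => (T ^ nDot n ε) x}

/-- The regionally proximal relation of order `k` (for `k = 0` this is all of `X × X`). -/
def RP {X : Type*} [MetricSpace X] (T : X ≃ₜ X) (k : ℕ) : Set (X × X) :=
  {p | ∀ δ > 0, ∃ (x' y' : X) (n : Fin k → ℤ),
    dist p.1 x' < δ ∧ dist p.2 y' < δ ∧
    ∀ ε : Fin k → Bool, ε ≠ v0 k →
      dist ((T ^ nDot n ε) x') ((T ^ nDot n ε) y') < δ}

/-- A factor map between topological dynamical systems: a continuous surjection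
intertwining the actions. -/
def IsFactorMap {X Z : Type*} [TopologicalSpace X] [TopologicalSpace Z]
    (T : X ≃ₜ X) (S : Z ≃ₜ Z) (π : X → Z) : Prop :=
  Continuous π ∧ Function.Surjective π ∧ ∀ x, π (T x) = S (π x)

/-- The diagonal homeomorphism `T^{[d]} = T × ⋯ × T` of `X^{[d]}`. -/
def diagHomeo {X : Type*} [TopologicalSpace X] (T : X ≃ₜ X) (d : ℕ) :
    ((Fin d → Bool) → X) ≃ₜ ((Fin d → Bool) → X) :=
  Homeomorph.piCongrRight fun _ : Fin d → Bool => T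

/-- `w` is a minimal point of the homeomorphism `S`. -/
def IsMinimalPoint {W : Type*} [TopologicalSpace W] (S : W ≃ₜ W) (w : W) : Prop :=
  ∀ y ∈ closure (Set.range fun n : ℤ => (S ^ n) w),
    closure (Set.range fun n : ℤ => (S ^ n) y)
      = closure (Set.range fun n : ℤ => (S ^ n) w)

/-- The `j`-th face transformation `T_j^{[d]}` of `X^{[d]}`. -/
def faceHomeo {X : Type*} [TopologicalSpace X] {d : ℕ} (T : X ≃ₜ X) (j : Fin d) :
    ((Fin d → Bool) → X) ≃ₜ ((Fin d → Bool) → X) :=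
  Homeomorph.piCongrRight fun ε : Fin d → Bool =>
    if ε j then T else Homeomorph.refl X

/-- The face group `F^{[d]}`: the group of homeomorphisms of `X^{[d]}`
generated by the face transformations. -/
def faceGroup {X : Type*} [TopologicalSpace X] (T : X ≃ₜ X) (d : ℕ) :
    Subgroup (((Fin d → Bool) → X) ≃ₜ ((Fin d → Bool) → X)) :=
  Subgroup.closure (Set.range (faceHomeo (d := d) T))

/-- The orbit of a point under a group of homeomorphisms. -/
def groupOrbit {W : Type*} [TopologicalSpace W] (G : Subgroup (W ≃ₜ W)) (w : W) : Set W :=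
  {y | ∃ g ∈ G, g w = y}

/-- The homeomorphism `id × T_*^{[d]}` of `X^{[d]}`, fixing the `(0,…,0)`-coordinate
and applying `T` to every other coordinate. -/
def idFaceHomeo {X : Type*} [TopologicalSpace X] (T : X ≃ₜ X) (d : ℕ) :
    ((Fin d → Bool) → X) ≃ₜ ((Fin d → Bool) → X) :=
  Homeomorph.piCongrRight fun ε : Fin d → Bool =>
    if ε = v0 d then Homeomorph.refl X else T

open Function

section CubeIndex

lemma nDot_add {d : ℕ} (n m : Fin d → ℤ) (ε : Fin d → Bool) :
    nDot (n + m) ε = nDot n ε + nDot m ε := by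
  simp only [nDot, ← Finset.sum_add_distrib, Pi.add_apply]
  exact Finset.sum_congr rfl fun i _ => by split_ifs <;> simp

lemma nDot_zero {d : ℕ} (ε : Fin d → Bool) : nDot 0 ε = 0 := by
  simp [nDot]

lemma nDot_v0 {d : ℕ} (n : Fin d → ℤ) : nDot n (v0 d) = 0 := by
  simp [nDot, v0]

lemma nDot_single {d : ℕ} (j : Fin d) (M : ℤ) (ε : Fin d → Bool) :
    nDot (Pi.single j M) ε = if ε j then M else 0 := by
  rw [nDot, Fintype.sum_eq_single j fun i hi => by simp [hi]]
  simp

lemma nDot_snoc_snoc {k : ℕ} (n : Fin k → ℤ) (m : ℤ) (η : Fin k → Bool) (b : Bool) :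
    nDot (Fin.snoc n m : Fin (k + 1) → ℤ) (Fin.snoc η b) = nDot n η + if b then m else 0 := by
  simp [nDot, Fin.sum_univ_castSucc]

lemma nDot_init {k : ℕ} (n : Fin k → ℤ) (ε : Fin (k + 1) → Bool) :
    nDot n (Fin.init ε) = nDot (Fin.snoc n 0 : Fin (k + 1) → ℤ) ε := by
  simp only [nDot, Fin.sum_univ_castSucc, Fin.snoc_castSucc, Fin.snoc_last, ite_self, add_zero]
  rfl

lemma nDot_xor {d : ℕ} (n : Fin d → ℤ) (χ ε : Fin d → Bool) :
    nDot n (fun i => xor (ε i) (χ i))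
      = nDot n χ + nDot (fun i => if χ i then -n i else n i) ε := by
  simp only [nDot, ← Finset.sum_add_distrib]
  exact Finset.sum_congr rfl fun i _ => by
    by_cases hχ : χ i <;> by_cases hε : ε i <;> simp [hχ, hε]

def IsAffineCubeMap {d e : ℕ} (σ : (Fin e → Bool) → (Fin d → Bool)) : Prop :=
  ∀ n : Fin d → ℤ, ∃ (c : ℤ) (n' : Fin e → ℤ), ∀ ε, nDot n (σ ε) = c + nDot n' ε

lemma isAffineCubeMap_init (k : ℕ) : IsAffineCubeMap (Fin.init : (Fin (k + 1) → Bool) → _) :=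
  fun n => ⟨0, Fin.snoc n 0, fun ε => by rw [nDot_init, zero_add]⟩

lemma isAffineCubeMap_snoc_false (k : ℕ) :
    IsAffineCubeMap fun η : Fin k → Bool => (Fin.snoc η false : Fin (k + 1) → Bool) :=
  fun n => ⟨0, Fin.init n, fun η => by simp [nDot, Fin.sum_univ_castSucc, Fin.init]⟩

lemma isAffineCubeMap_xor {d : ℕ} (χ : Fin d → Bool) :
    IsAffineCubeMap fun ε : Fin d → Bool => fun i => xor (ε i) (χ i) :=
  fun n => ⟨_, _, nDot_xor n χ⟩

end CubeIndex

section HomeomorphPowers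

variable {X : Type*} [TopologicalSpace X]

lemma homeomorph_zpow_add_apply (T : X ≃ₜ X) (a b : ℤ) (x : X) :
    (T ^ (a + b)) x = (T ^ a) ((T ^ b) x) := by
  rw [zpow_add]; rfl

lemma Function.Semiconj.homeomorph_zpow {Z : Type*} [TopologicalSpace Z] {π : X → Z}
    {T : X ≃ₜ X} {S : Z ≃ₜ Z} (h : Semiconj π T S) (r : ℤ) :
    Semiconj π ⇑(T ^ r) ⇑(S ^ r) := by
  induction r using Int.induction_on with
  | zero => exact Semiconj.id_right
  | succ i ih =>
    rw [zpow_add_one, zpow_add_one]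
    exact ih.comp_right h
  | pred i ih =>
    rw [zpow_sub_one, zpow_sub_one]
    exact ih.comp_right (h.inverses_right T.apply_symm_apply S.symm_apply_apply)

end HomeomorphPowers

section EllisSemigroup

instance {X : Type*} [TopologicalSpace X] : TopologicalSpace (Function.End X) :=
  inferInstanceAs (TopologicalSpace (X → X))

instance {X : Type*} [TopologicalSpace X] [T2Space X] : T2Space (Function.End X) :=
  inferInstanceAs (T2Space (X → X))

instance {X : Type*} [TopologicalSpace X] [CompactSpace X] : CompactSpace (Function.End X) :=
  inferInstanceAs (CompactSpace (X → X))

lemma mul_mem_closure_of_mul_mem {M : Type*} [Mul M] [TopologicalSpace M] {s : Set M}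
    (hs : ∀ a ∈ s, ∀ b ∈ s, a * b ∈ s) (hleft : ∀ a ∈ s, Continuous fun b : M => a * b)
    (hright : ∀ b : M, Continuous fun a : M => a * b) {a b : M}
    (ha : a ∈ closure s) (hb : b ∈ closure s) : a * b ∈ closure s :=
  closure_closure (s := s) ▸ map_mem_closure (f := fun a => a * b) (hright b) ha fun a' ha' =>
    map_mem_closure (f := fun b => a' * b) (hleft a' ha') hb fun b' hb' => hs a' ha' b' hb'

variable {X : Type*} [TopologicalSpace X]

def ellis (T : X ≃ₜ X) : Set (Function.End X) :=
  closure (Set.range fun r : ℤ => (⇑(T ^ r) : Function.End X))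

/-- The general element of the group generated by the face transformations and the diagonal
transformation of `X^{[d]}`, recorded by its action `T ^ (m + n · ε)` on each coordinate `ε`. -/
def faceElt (T : X ≃ₜ X) {d : ℕ} (m : ℤ) (n : Fin d → ℤ) : (Fin d → Bool) → Function.End X :=
  fun ε => ⇑(T ^ (m + nDot n ε))

def faceEllis (T : X ≃ₜ X) (d : ℕ) : Set ((Fin d → Bool) → Function.End X) :=
  closure (Set.range fun mn : ℤ × (Fin d → ℤ) => faceElt T mn.1 mn.2)

lemma faceElt_mem_faceEllis (T : X ≃ₜ X) {d : ℕ} (m : ℤ) (n : Fin d → ℤ) :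
    faceElt T m n ∈ faceEllis T d :=
  subset_closure ⟨(m, n), rfl⟩

lemma faceElt_mul_faceElt (T : X ≃ₜ X) {d : ℕ} (m m' : ℤ) (n n' : Fin d → ℤ) :
    faceElt T m n * faceElt T m' n' = faceElt T (m + m') (n + n') := by
  funext ε x
  change (T ^ (m + nDot n ε)) ((T ^ (m' + nDot n' ε)) x) = (T ^ (m + m' + nDot (n + n') ε)) x
  rw [← homeomorph_zpow_add_apply, nDot_add]
  ring_nf

lemma continuous_mul_right_pi_end {ι : Type*} (q : ι → Function.End X) :
    Continuous fun p : ι → Function.End X => p * q :=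
  continuous_pi fun i => continuous_pi fun x =>
    (continuous_apply (q i x)).comp (continuous_apply i)

lemma continuous_faceElt_mul (T : X ≃ₜ X) {d : ℕ} (m : ℤ) (n : Fin d → ℤ) :
    Continuous fun p : (Fin d → Bool) → Function.End X => faceElt T m n * p :=
  continuous_pi fun ε => continuous_pi fun x =>
    (T ^ (m + nDot n ε)).continuous.comp ((continuous_apply x).comp (continuous_apply ε))

lemma mul_mem_faceEllis {T : X ≃ₜ X} {d : ℕ} {p q : (Fin d → Bool) → Function.End X}
    (hp : p ∈ faceEllis T d) (hq : q ∈ faceEllis T d) : p * q ∈ faceEllis T d := by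
  refine mul_mem_closure_of_mul_mem ?_ ?_ continuous_mul_right_pi_end hp hq
  · rintro _ ⟨⟨m, n⟩, rfl⟩ _ ⟨⟨m', n'⟩, rfl⟩
    exact ⟨(m + m', n + n'), (faceElt_mul_faceElt T m m' n n').symm⟩
  · rintro _ ⟨⟨m, n⟩, rfl⟩
    exact continuous_faceElt_mul T m n

lemma apply_mem_ellis {T : X ≃ₜ X} {d : ℕ} {p : (Fin d → Bool) → Function.End X}
    (hp : p ∈ faceEllis T d) (ε : Fin d → Bool) : p ε ∈ ellis T := by
  refine map_mem_closure (f := fun p => p ε) (continuous_apply ε) hp ?_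
  rintro _ ⟨⟨m, n⟩, rfl⟩
  exact ⟨m + nDot n ε, rfl⟩

lemma const_mem_faceEllis {T : X ≃ₜ X} {f : Function.End X} (hf : f ∈ ellis T) (d : ℕ) :
    (fun _ => f) ∈ faceEllis T d :=
  map_mem_closure (f := fun f _ => f) (continuous_pi fun _ => continuous_id) hf fun _ ⟨r, h⟩ =>
    ⟨(r, 0), by funext ε; simp [faceElt, nDot_zero, h]⟩

lemma comp_mem_faceEllis {T : X ≃ₜ X} {d e : ℕ} {σ : (Fin e → Bool) → (Fin d → Bool)}
    (hσ : IsAffineCubeMap σ) {p : (Fin d → Bool) → Function.End X} (hp : p ∈ faceEllis T d) :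
    p ∘ σ ∈ faceEllis T e := by
  refine map_mem_closure (f := (· ∘ σ)) (continuous_pi fun ε => continuous_apply (σ ε)) hp ?_
  rintro _ ⟨⟨m, n⟩, rfl⟩
  obtain ⟨c, n', hn'⟩ := hσ n
  refine ⟨(m + c, n'), funext fun ε => ?_⟩
  change ⇑(T ^ (m + c + nDot n' ε)) = ⇑(T ^ (m + nDot n (σ ε)))
  rw [hn', add_assoc]

end EllisSemigroup

section Parallelepiped

variable {X : Type*} [TopologicalSpace X]

lemma comp_mem_cubeQ {T : X ≃ₜ X} {d e : ℕ} {σ : (Fin e → Bool) → (Fin d → Bool)}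
    (hσ : IsAffineCubeMap σ) {y : (Fin d → Bool) → X} (hy : y ∈ cubeQ T d) :
    y ∘ σ ∈ cubeQ T e := by
  refine map_mem_closure (f := (· ∘ σ)) (continuous_pi fun ε => continuous_apply (σ ε)) hy ?_
  rintro _ ⟨x, n, rfl⟩
  obtain ⟨c, n', hn'⟩ := hσ n
  refine ⟨(T ^ c) x, n', funext fun ε => ?_⟩
  change (T ^ nDot n (σ ε)) x = _
  rw [hn', add_comm, homeomorph_zpow_add_apply]

lemma act_mem_cubeQ {T : X ≃ₜ X} {d : ℕ} {p : (Fin d → Bool) → Function.End X}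
    (hp : p ∈ faceEllis T d) {y : (Fin d → Bool) → X} (hy : y ∈ cubeQ T d) :
    (fun ε => p ε (y ε)) ∈ cubeQ T d := by
  have hgen : ∀ (m : ℤ) (n : Fin d → ℤ), (fun ε => (T ^ (m + nDot n ε)) (y ε)) ∈ cubeQ T d := by
    intro m n
    refine map_mem_closure (f := fun y ε => (T ^ (m + nDot n ε)) (y ε))
      (continuous_pi fun ε => (T ^ (m + nDot n ε)).continuous.comp (continuous_apply ε)) hy ?_
    rintro _ ⟨x, n', rfl⟩
    refine ⟨(T ^ m) x, n + n', funext fun ε => ?_⟩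
    change (T ^ (m + nDot n ε)) ((T ^ nDot n' ε) x) = _
    rw [← homeomorph_zpow_add_apply, nDot_add, ← homeomorph_zpow_add_apply]
    ring_nf
  refine closure_minimal (t := {p | (fun ε => p ε (y ε)) ∈ cubeQ T d}) ?_
    (isClosed_closure.preimage ?_) hp
  · rintro _ ⟨⟨m, n⟩, rfl⟩
    exact hgen m n
  · exact continuous_pi fun ε => (continuous_apply (y ε)).comp (continuous_apply ε)

lemma ite_mem_cubeQ {T : X ≃ₜ X} (hmin : IsMinimalTDS T) {d : ℕ} (x y : X) (j : Fin d) :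
    (fun ε : Fin d → Bool => if ε j then y else x) ∈ cubeQ T d := by
  refine map_mem_closure (f := fun z (ε : Fin d → Bool) => if ε j then z else x)
    (continuous_pi fun ε => continuous_if_const _ (fun _ => continuous_id)
      fun _ => continuous_const) (hmin x y) ?_
  rintro _ ⟨M, rfl⟩
  refine ⟨x, Pi.single j M, funext fun ε => ?_⟩
  by_cases h : ε j <;> simp [h, nDot_single]

variable [CompactSpace X] [T2Space X]

lemma exists_mem_ellis_apply_eq {T : X ≃ₜ X} (hmin : IsMinimalTDS T) (x₀ x : X) :
    ∃ f ∈ ellis T, f x₀ = x := by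
  have hclosed : IsClosed ((fun f : Function.End X => f x₀) '' ellis T) :=
    (isClosed_closure.isCompact.image (continuous_apply x₀)).isClosed
  refine closure_minimal (t := (fun f : Function.End X => f x₀) '' ellis T) ?_ hclosed (hmin x₀ x)
  rintro _ ⟨r, rfl⟩
  exact ⟨_, subset_closure ⟨r, rfl⟩, rfl⟩

lemma exists_faceEllis_eq_of_mem_cubeQ {T : X ≃ₜ X} (hmin : IsMinimalTDS T) (x₀ : X) {d : ℕ}
    {y : (Fin d → Bool) → X} (hy : y ∈ cubeQ T d) :
    ∃ p ∈ faceEllis T d, (fun ε => p ε x₀) = y := by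
  have hclosed : IsClosed ((fun (p : (Fin d → Bool) → Function.End X) ε => p ε x₀) ''
      faceEllis T d) :=
    (isClosed_closure.isCompact.image
      (continuous_pi fun ε => (continuous_apply x₀).comp (continuous_apply ε))).isClosed
  refine closure_minimal (t := (fun (p : (Fin d → Bool) → Function.End X) ε => p ε x₀) ''
      faceEllis T d) ?_ hclosed hy
  rintro _ ⟨x, n, rfl⟩
  obtain ⟨f, hf, rfl⟩ := exists_mem_ellis_apply_eq hmin x₀ x
  refine ⟨faceElt T 0 n * fun _ => f,
    mul_mem_faceEllis (faceElt_mem_faceEllis T 0 n) (const_mem_faceEllis hf d), ?_⟩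
  funext ε
  change (T ^ (0 + nDot n ε)) (f x₀) = (T ^ nDot n ε) (f x₀)
  rw [zero_add]

end Parallelepiped

section Distal

variable {X : Type*} [MetricSpace X]

def IsDistalTDS (T : X ≃ₜ X) : Prop :=
  ∀ x y : X, (∀ δ > 0, ∃ n : ℤ, dist ((T ^ n) x) ((T ^ n) y) < δ) → x = y

lemma eq_one_of_mem_ellis_of_mul_self {T : X ≃ₜ X} (hT : IsDistalTDS T) {f : Function.End X}
    (hf : f ∈ ellis T) (hff : f * f = f) : f = 1 := by
  funext x
  refine (hT x (f x) fun δ hδ => ?_).symm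
  have hopen : IsOpen {g : Function.End X | dist (g x) (g (f x)) < δ} :=
    isOpen_lt ((continuous_apply x).dist (continuous_apply (f x))) continuous_const
  have hf_mem : f ∈ {g : Function.End X | dist (g x) (g (f x)) < δ} := by
    change dist (f x) ((f * f) x) < δ
    rwa [hff, dist_self]
  obtain ⟨_, hg, r, rfl⟩ := mem_closure_iff.1 hf _ hopen hf_mem
  exact ⟨r, hg⟩

variable [CompactSpace X]

lemma exists_inverse_of_mem_faceEllis {T : X ≃ₜ X} (hT : IsDistalTDS T) {d : ℕ}
    {p : (Fin d → Bool) → Function.End X} (hp : p ∈ faceEllis T d) :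
    ∃ q ∈ faceEllis T d, q * p = 1 ∧ p * q = 1 := by
  have left_inv : ∀ p ∈ faceEllis T d, ∃ q ∈ faceEllis T d, q * p = 1 := by
    intro p hp
    obtain ⟨_, ⟨q, hq, rfl⟩, hidem⟩ := exists_idempotent_in_compact_subsemigroup
      continuous_mul_right_pi_end ((· * p) '' faceEllis T d)
      ⟨_, _, faceElt_mem_faceEllis T 0 0, rfl⟩
      (isClosed_closure.isCompact.image (continuous_mul_right_pi_end p))
      (by
        rintro _ ⟨a, ha, rfl⟩ _ ⟨b, hb, rfl⟩
        exact ⟨a * p * b, mul_mem_faceEllis (mul_mem_faceEllis ha hp) hb, by simp only [mul_assoc]⟩)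
    exact ⟨q, hq, funext fun ε =>
      eq_one_of_mem_ellis_of_mul_self hT (apply_mem_ellis (mul_mem_faceEllis hq hp) ε)
        (congrFun hidem ε)⟩
  obtain ⟨q, hq, hqp⟩ := left_inv p hp
  obtain ⟨r, -, hrq⟩ := left_inv q hq
  exact ⟨q, hq, hqp, left_inv_eq_right_inv hrq hqp ▸ hrq⟩

end Distal

section Factor

variable {X Z : Type*} [TopologicalSpace X] [TopologicalSpace Z] [T2Space Z]
  {T : X ≃ₜ X} {S : Z ≃ₜ Z} {π : X → Z}

lemma map_apply_eq_of_mem_ellis (hπ : Continuous π) (hsc : Semiconj π T S)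
    {f : Function.End X} (hf : f ∈ ellis T) {x y : X} (hxy : π x = π y) :
    π (f x) = π (f y) := by
  refine closure_minimal (t := {g : Function.End X | π (g x) = π (g y)}) ?_
    (isClosed_eq (hπ.comp (continuous_apply x)) (hπ.comp (continuous_apply y))) hf
  rintro _ ⟨r, rfl⟩
  change π ((T ^ r) x) = π ((T ^ r) y)
  rw [(hsc.homeomorph_zpow r).eq, (hsc.homeomorph_zpow r).eq, hxy]

lemma image_cubeQ [CompactSpace X] (hπ : IsFactorMap T S π) (d : ℕ) :
    (fun (y : (Fin d → Bool) → X) ε => π (y ε)) '' cubeQ T d = cubeQ S d := by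
  obtain ⟨hcont, hsurj, hsc⟩ := hπ
  have hcont' : Continuous fun (y : (Fin d → Bool) → X) ε => π (y ε) :=
    continuous_pi fun ε => hcont.comp (continuous_apply ε)
  have hgen : ∀ (x : X) (n : Fin d → ℤ),
      (fun ε => π ((T ^ nDot n ε) x)) = fun ε => (S ^ nDot n ε) (π x) :=
    fun x n => funext fun ε => (Semiconj.homeomorph_zpow hsc _).eq x
  refine Subset.antisymm ?_ ?_
  · rintro _ ⟨y, hy, rfl⟩
    refine map_mem_closure hcont' hy ?_
    rintro _ ⟨x, n, rfl⟩
    exact ⟨π x, n, hgen x n⟩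
  · refine closure_minimal ?_ (isClosed_closure.isCompact.image hcont').isClosed
    rintro _ ⟨z, n, rfl⟩
    obtain ⟨x, rfl⟩ := hsurj z
    exact ⟨_, subset_closure ⟨x, n, rfl⟩, hgen x n⟩

end Factor

section RegionallyProximal

variable {X : Type*} [MetricSpace X] [CompactSpace X] {T : X ≃ₜ X}

lemma exists_mem_cubeQ_of_mem_RP (hmin : IsMinimalTDS T) {k : ℕ} {x y : X}
    (hxy : (x, y) ∈ RP T k) :
    ∃ c ∈ cubeQ T (k + 1), c (Fin.snoc (v0 k) false) = x ∧ c (Fin.snoc (v0 k) true) = y ∧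
      ∀ η ≠ v0 k, c (Fin.snoc η true) = c (Fin.snoc η false) := by
  let Φ : ((Fin (k + 1) → Bool) → X) → X × X × ({η : Fin k → Bool // η ≠ v0 k} → ℝ) :=
    fun c => (c (Fin.snoc (v0 k) false), c (Fin.snoc (v0 k) true),
      fun η => dist (c (Fin.snoc η.1 true)) (c (Fin.snoc η.1 false)))
  have hΦ : Continuous Φ := by fun_prop
  have hwitness : ∀ (x' y' : X) (n : Fin k → ℤ), ∃ c ∈ cubeQ T (k + 1),
      Φ c = (x', y', fun η => dist ((T ^ nDot n η.1) y') ((T ^ nDot n η.1) x')) := by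
    intro x' y' n
    refine ⟨_, act_mem_cubeQ (faceElt_mem_faceEllis T 0 (Fin.snoc n 0))
      (ite_mem_cubeQ hmin x' y' (Fin.last k)), ?_⟩
    simp [Φ, faceElt, nDot_snoc_snoc, nDot_v0]
  have hclosure : (x, y, 0) ∈ closure (Φ '' cubeQ T (k + 1)) := by
    refine Metric.mem_closure_iff.2 fun δ hδ => ?_
    obtain ⟨x', y', n, hx', hy', hn⟩ := hxy δ hδ
    obtain ⟨c, hc, hΦc⟩ := hwitness x' y' n
    refine ⟨_, ⟨c, hc, rfl⟩, ?_⟩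
    simp only [hΦc, Prod.dist_eq, max_lt_iff, dist_pi_lt_iff hδ]
    exact ⟨hx', hy', fun η => by simpa [Real.dist_eq, dist_comm] using hn η.1 η.2⟩
  obtain ⟨c, hc, hΦc⟩ := (isClosed_closure.isCompact.image hΦ).isClosed.closure_eq ▸ hclosure
  simp only [Φ, Prod.mk.injEq, funext_iff] at hΦc
  exact ⟨c, hc, hΦc.1, hΦc.2.1, fun η hη => dist_eq_zero.1 (hΦc.2.2 ⟨η, hη⟩)⟩

lemma update_snoc_mem_cubeQ_of_mem_RP (hmin : IsMinimalTDS T) (hT : IsDistalTDS T) {k : ℕ}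
    {x y : X} (hxy : (x, y) ∈ RP T k) :
    update (fun _ => x) (Fin.snoc (v0 k) true) y ∈ cubeQ T (k + 1) := by
  obtain ⟨c, hc, hc₀, hc₁, hglue⟩ := exists_mem_cubeQ_of_mem_RP hmin hxy
  obtain ⟨p, hp, hpc⟩ :=
    exists_faceEllis_eq_of_mem_cubeQ hmin x (comp_mem_cubeQ (isAffineCubeMap_snoc_false k) hc)
  obtain ⟨q, hq, hqp, hpq⟩ := exists_inverse_of_mem_faceEllis hT hp
  have hp₀ : p (v0 k) x = x := (congrFun hpc (v0 k)).trans hc₀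
  have hbottom : ∀ η, p (v0 k) (q η (c (Fin.snoc η false))) = x := fun η => by
    rw [show c (Fin.snoc η false) = p η x from (congrFun hpc η).symm]
    change p (v0 k) ((q * p) η x) = x
    rwa [hqp]
  -- apply `q` on both faces, then undo `q (v0 k)` by the diagonal `p (v0 k)`
  have hg : (fun _ => p (v0 k)) * (q ∘ Fin.init) ∈ faceEllis T (k + 1) :=
    mul_mem_faceEllis (const_mem_faceEllis (apply_mem_ellis hp _) _)
      (comp_mem_faceEllis (isAffineCubeMap_init k) hq)
  convert act_mem_cubeQ hg hc using 1
  funext ε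
  induction ε using Fin.snocCases with
  | snoc η b =>
    change _ = p (v0 k) (q (Fin.init (Fin.snoc η b : Fin (k + 1) → Bool)) (c (Fin.snoc η b)))
    rw [Fin.init_snoc]
    by_cases hη : η = v0 k
    · subst hη
      cases b
      · simp [hbottom]
      · rw [hc₁, update_self]
        exact (congrFun (congrFun hpq (v0 k)) y).symm
    · cases b
      · simp [hη, hbottom]
      · simp [hη, hglue η hη, hbottom]

lemma update_mem_cubeQ_of_mem_RP (hmin : IsMinimalTDS T) (hT : IsDistalTDS T) {k : ℕ}
    {x y : X} (hxy : (x, y) ∈ RP T k) (η₀ : Fin (k + 1) → Bool) :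
    update (fun _ => x) η₀ y ∈ cubeQ T (k + 1) := by
  let χ : Fin (k + 1) → Bool := fun i => xor (η₀ i) ((Fin.snoc (v0 k) true : Fin (k + 1) → Bool) i)
  let σ : (Fin (k + 1) → Bool) → (Fin (k + 1) → Bool) := fun ε i => xor (ε i) (χ i)
  have hσ : Injective σ := Involutive.injective fun ε => funext fun i => by simp [σ]
  have hση₀ : σ η₀ = Fin.snoc (v0 k) true := funext fun i => by simp [σ, χ]
  have := comp_mem_cubeQ (isAffineCubeMap_xor χ) (update_snoc_mem_cubeQ_of_mem_RP hmin hT hxy)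
  rwa [← hση₀, update_comp_eq_of_injective _ hσ] at this

end RegionallyProximal

section FiberChange

variable {X Z : Type*} [MetricSpace X] [CompactSpace X] [TopologicalSpace Z] [T2Space Z]
  {T : X ≃ₜ X} {S : Z ≃ₜ Z} {π : X → Z}

lemma update_mem_cubeQ_of_map_eq (hmin : IsMinimalTDS T) (hT : IsDistalTDS T)
    (hπ : Continuous π) (hsc : Semiconj π T S) {k : ℕ}
    (hRP : ∀ x y, π x = π y → (x, y) ∈ RP T k) {w : (Fin (k + 1) → Bool) → X}
    (hw : w ∈ cubeQ T (k + 1)) (η₀ : Fin (k + 1) → Bool) {u : X} (hu : π u = π (w η₀)) :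
    update w η₀ u ∈ cubeQ T (k + 1) := by
  obtain ⟨p, hp, rfl⟩ := exists_faceEllis_eq_of_mem_cubeQ hmin u hw
  obtain ⟨q, hq, hqp, hpq⟩ := exists_inverse_of_mem_faceEllis hT hp
  have hfiber : π u = π (q η₀ u) := by
    have h := map_apply_eq_of_mem_ellis hπ hsc (apply_mem_ellis hq η₀) hu
    rwa [show q η₀ (p η₀ u) = u from congrFun (congrFun hqp η₀) u, eq_comm] at h
  convert act_mem_cubeQ hp (update_mem_cubeQ_of_mem_RP hmin hT (hRP _ _ hfiber) η₀) using 1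
  funext ε
  by_cases hε : ε = η₀
  · subst hε
    simp only [update_self]
    exact (congrFun (congrFun hpq ε) u).symm
  · simp [hε]

lemma mem_cubeQ_of_map_eq (hmin : IsMinimalTDS T) (hT : IsDistalTDS T)
    (hπ : Continuous π) (hsc : Semiconj π T S) {k : ℕ}
    (hRP : ∀ x y, π x = π y → (x, y) ∈ RP T k) {w y : (Fin (k + 1) → Bool) → X}
    (hw : w ∈ cubeQ T (k + 1)) (hy : ∀ ε, π (y ε) = π (w ε)) : y ∈ cubeQ T (k + 1) := by
  classical
  suffices ∀ s : Finset (Fin (k + 1) → Bool), s.piecewise y w ∈ cubeQ T (k + 1) by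
    simpa using this Finset.univ
  intro s
  induction s using Finset.induction_on with
  | empty => simpa using hw
  | insert η s hη ih =>
    rw [Finset.piecewise_insert]
    refine update_mem_cubeQ_of_map_eq hmin hT hπ hsc hRP ih η ?_
    rw [Finset.piecewise_eq_of_notMem _ _ _ hη]
    exact hy η

end FiberChange

theorem statement4_general {X Z : Type*} [MetricSpace X] [CompactSpace X]
    [MetricSpace Z]
    (T : X ≃ₜ X) (S : Z ≃ₜ Z) (hmin : IsMinimalTDS T)
    (hdistal : ∀ x y : X, (∀ δ > 0, ∃ n : ℤ, dist ((T ^ n) x) ((T ^ n) y) < δ) → x = y)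
    (d : ℕ) (hd : 1 ≤ d)
    (π : X → Z) (hπ : IsFactorMap T S π)
    (hnil : ∀ x y : X, π x = π y ↔ (x, y) ∈ RP T (d - 1)) :
    cubeQ T d
      = (fun (y : (Fin d → Bool) → X) (ε : Fin d → Bool) => π (y ε)) ⁻¹' cubeQ S d := by
  obtain ⟨k, rfl⟩ : ∃ k, d = k + 1 := ⟨d - 1, by omega⟩
  ext y
  rw [mem_preimage, ← image_cubeQ hπ]
  refine ⟨fun hy => ⟨y, hy, rfl⟩, ?_⟩
  rintro ⟨w, hw, hwy⟩
  exact mem_cubeQ_of_map_eq hmin hdistal hπ.1 hπ.2.2 (fun x y => (hnil x y).1) hw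
    fun ε => (congrFun hwy ε).symm

/-- for a distal minimal system, `Q^{[d]}(X) = (π^{[d]})⁻¹(Q^{[d]}(Z))`,
where `π` is the factor map onto the maximal `(d-1)`-step pro-nilfactor. -/
theorem statement4 {X Z : Type*} [MetricSpace X] [CompactSpace X]
    [MetricSpace Z] [CompactSpace Z]
    (T : X ≃ₜ X) (S : Z ≃ₜ Z) (hmin : IsMinimalTDS T)
    (hdistal : ∀ x y : X, (∀ δ > 0, ∃ n : ℤ, dist ((T ^ n) x) ((T ^ n) y) < δ) → x = y)
    (d : ℕ) (hd : 1 ≤ d)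
    (π : X → Z) (hπ : IsFactorMap T S π)
    (hnil : ∀ x y : X, π x = π y ↔ (x, y) ∈ RP T (d - 1)) :
    cubeQ T d
      = (fun (y : (Fin d → Bool) → X) (ε : Fin d → Bool) => π (y ε)) ⁻¹' cubeQ S d :=
  statement4_general T S hmin hdistal d hd π hπ hnil
end

section
/- Let (X,T) be a topological dynamical system and let d ≥ 1 be an integer. If x ∈ X^{[d]} is a minimal point of the homeomorphism id × T_*^{[d]} (the map of X^{[d]} fixing the coordinate at ε = (0,…,0) and applying T to every other coordinate), then x is a minimal point of the face group F^{[d]}, i.e. the closure of the F^{[d]}-orbit of x is a minimal closed F^{[d]}-invariant set. -/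
open Set

/-!
Work in the enveloping semigroups `E(T) ⊆ X^X` and `E(F^{[d]})`. The enveloping semigroup of
`id × T_*` is `{id × g_* : g ∈ E(T)}`, so minimality of `x` gives an idempotent `u` in a minimal
left ideal of `E(T)` fixing every `x_ε`, `ε ≠ 0`. Composing the maps "apply `u` on the face
`ε_j = 1`", which lie in `E(F^{[d]})`, gives `U = id × u_* ∈ E(F^{[d]})` with `U x = x`.
Every element of `E(F^{[d]})` acts coordinatewise by elements of `E(T)`, trivially at `ε = 0`, so
an idempotent `e` with `e U = U e = e` equals `U` coordinate by coordinate, by minimality of `u`.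
Hence `U` lies in a minimal left ideal of `E(F^{[d]})`, and a point fixed by an element of a
minimal left ideal is a minimal point.
-/

section Envelope

variable {Z : Type*} [TopologicalSpace Z]

/-- The enveloping semigroup of a group of homeomorphisms: the closure of the group in
`Z → Z` with the topology of pointwise convergence. -/
def envelope (G : Subgroup (Z ≃ₜ Z)) : Set (Z → Z) :=
  closure ((⇑) '' (G : Set (Z ≃ₜ Z)))

theorem coe_mem_envelope {G : Subgroup (Z ≃ₜ Z)} {g : Z ≃ₜ Z} (hg : g ∈ G) :
    ⇑g ∈ envelope G :=
  subset_closure (mem_image_of_mem _ hg)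

theorem id_mem_envelope (G : Subgroup (Z ≃ₜ Z)) : id ∈ envelope G :=
  coe_mem_envelope G.one_mem

theorem envelope_mono {G H : Subgroup (Z ≃ₜ Z)} (h : G ≤ H) : envelope G ⊆ envelope H :=
  closure_mono (image_mono h)

theorem comp_mem_envelope {G : Subgroup (Z ≃ₜ Z)} {p q : Z → Z} (hp : p ∈ envelope G)
    (hq : q ∈ envelope G) : p ∘ q ∈ envelope G := by
  have hleft : ∀ g ∈ G, ⇑g ∘ q ∈ envelope G := by
    intro g hg
    refine MapsTo.closure (f := (⇑g ∘ ·)) ?_ (continuous_pi fun z =>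
      g.continuous.comp (continuous_apply z)) hq
    rintro _ ⟨h, hh, rfl⟩
    exact ⟨g * h, G.mul_mem hg hh, rfl⟩
  refine MapsTo.closure_left (f := (· ∘ q)) ?_ (continuous_pi fun z => continuous_apply (q z))
    isClosed_closure hp
  rintro _ ⟨g, hg, rfl⟩
  exact hleft g hg

theorem envelope_eq_image [T2Space Z] {Y : Type*} [TopologicalSpace Y] [CompactSpace Y]
    {G : Subgroup (Y ≃ₜ Y)} {H : Subgroup (Z ≃ₜ Z)} {Ψ : (Y → Y) → (Z → Z)}
    (hΨ : Continuous Ψ) (hGH : (⇑) '' (H : Set (Z ≃ₜ Z)) = Ψ '' ((⇑) '' (G : Set (Y ≃ₜ Y)))) :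
    envelope H = Ψ '' envelope G := by
  rw [envelope, envelope, hGH, image_closure_of_isCompact isClosed_closure.isCompact
    hΨ.continuousOn]

theorem range_zpow_apply_eq_groupOrbit (S : Z ≃ₜ Z) (w : Z) :
    range (fun m : ℤ => (S ^ m) w) = groupOrbit (Subgroup.zpowers S) w := by
  ext y
  simp [groupOrbit, Subgroup.mem_zpowers_iff]

/-- Minimal left ideals are taken among the closed ones; nothing is lost, since `E ∘ q` is
closed for every `q ∈ E`. -/
structure IsClosedLeftIdeal (G : Subgroup (Z ≃ₜ Z)) (L : Set (Z → Z)) : Prop where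
  nonempty : L.Nonempty
  isClosed : IsClosed L
  subset_envelope : L ⊆ envelope G
  comp_mem : ∀ p ∈ envelope G, ∀ q ∈ L, p ∘ q ∈ L

theorem isClosedLeftIdeal_envelope (G : Subgroup (Z ≃ₜ Z)) :
    IsClosedLeftIdeal G (envelope G) :=
  ⟨⟨id, id_mem_envelope G⟩, isClosed_closure, subset_rfl, fun _ hp _ hq => comp_mem_envelope hp hq⟩

def IsGroupMinimalPoint (G : Subgroup (Z ≃ₜ Z)) (z : Z) : Prop :=
  ∀ y ∈ closure (groupOrbit G z), closure (groupOrbit G y) = closure (groupOrbit G z)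

variable {G : Subgroup (Z ≃ₜ Z)} [CompactSpace Z]

theorem IsClosedLeftIdeal.exists_minimal {L : Set (Z → Z)} (hL : IsClosedLeftIdeal G L) :
    ∃ M ⊆ L, Minimal (IsClosedLeftIdeal G) M := by
  refine zorn_superset_nonempty {L | IsClosedLeftIdeal G L} ?_ L hL
  intro c hc hchain hne
  have : Nonempty c := hne.to_subtype
  refine ⟨⋂₀ c, ⟨?_, isClosed_sInter fun s hs => (hc hs).isClosed, ?_, ?_⟩,
    fun s hs => sInter_subset_of_mem hs⟩
  · rw [sInter_eq_iInter]
    exact IsCompact.nonempty_iInter_of_directed_nonempty_isCompact_isClosed _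
      (fun s t => (hchain.total s.2 t.2).elim (fun h => ⟨s, subset_rfl, h⟩)
        fun h => ⟨t, h, subset_rfl⟩) (fun s => (hc s.2).nonempty)
      (fun s => (hc s.2).isClosed.isCompact) (fun s => (hc s.2).isClosed)
  · obtain ⟨s, hs⟩ := hne
    exact (sInter_subset_of_mem hs).trans (hc hs).subset_envelope
  · intro p hp q hq
    exact mem_sInter.2 fun s hs => (hc hs).comp_mem p hp q (mem_sInter.1 hq s hs)

theorem exists_minimal_isClosedLeftIdeal (G : Subgroup (Z ≃ₜ Z)) :
    ∃ L, Minimal (IsClosedLeftIdeal G) L :=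
  let ⟨L, _, hL⟩ := (isClosedLeftIdeal_envelope G).exists_minimal
  ⟨L, hL⟩

variable [T2Space Z]

theorem closure_groupOrbit (G : Subgroup (Z ≃ₜ Z)) (w : Z) :
    closure (groupOrbit G w) = (fun p => p w) '' envelope G := by
  rw [envelope, image_closure_of_isCompact isClosed_closure.isCompact
    (continuous_apply w).continuousOn, image_image]
  rfl

theorem exists_idempotent_of_isClosed {S : Set (Z → Z)} (hne : S.Nonempty) (hS : IsClosed S)
    (hmul : ∀ p ∈ S, ∀ q ∈ S, p ∘ q ∈ S) : ∃ u ∈ S, u ∘ u = u :=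
  letI : TopologicalSpace (Function.End Z) := inferInstanceAs (TopologicalSpace (Z → Z))
  haveI : T2Space (Function.End Z) := inferInstanceAs (T2Space (Z → Z))
  exists_idempotent_in_compact_subsemigroup (M := Function.End Z)
    (fun r => continuous_pi fun z => continuous_apply (r z)) S hne hS.isCompact hmul

theorem isClosedLeftIdeal_image_comp {q : Z → Z} (hq : q ∈ envelope G) :
    IsClosedLeftIdeal G ((· ∘ q) '' envelope G) where
  nonempty := ⟨_, mem_image_of_mem _ (id_mem_envelope G)⟩
  isClosed := (isClosed_closure.isCompact.image
    (continuous_pi fun z => continuous_apply (q z))).isClosed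
  subset_envelope := by
    rintro _ ⟨p, hp, rfl⟩
    exact comp_mem_envelope hp hq
  comp_mem := by
    rintro p hp _ ⟨r, hr, rfl⟩
    exact ⟨p ∘ r, comp_mem_envelope hp hr, rfl⟩

variable {L : Set (Z → Z)}

theorem image_comp_eq_of_minimal (hL : Minimal (IsClosedLeftIdeal G) L) {q : Z → Z}
    (hq : q ∈ L) : (· ∘ q) '' envelope G = L := by
  refine hL.eq_of_subset (isClosedLeftIdeal_image_comp (hL.prop.subset_envelope hq)) ?_
  rintro _ ⟨p, hp, rfl⟩
  exact hL.prop.comp_mem p hp q hq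

theorem eq_of_minimal_of_idempotent (hL : Minimal (IsClosedLeftIdeal G) L) {u v : Z → Z}
    (hu : u ∈ L) (hv : v ∈ envelope G) (hvv : v ∘ v = v) (hvu : v ∘ u = v) (huv : u ∘ v = v) :
    v = u := by
  have hvL : v ∈ L := hvu ▸ hL.prop.comp_mem v hv u hu
  obtain ⟨s, -, hs⟩ := (image_comp_eq_of_minimal hL hvL).symm ▸ hu
  calc v = u ∘ v := huv.symm
    _ = s ∘ (v ∘ v) := by rw [← hs]; rfl
    _ = u := by rw [hvv, ← hs]

theorem exists_minimal_mem_of_idempotent {U : Z → Z} (hU : U ∈ envelope G) (hUU : U ∘ U = U)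
    (hmin : ∀ e ∈ envelope G, e ∘ e = e → e ∘ U = e → U ∘ e = e → e = U) :
    ∃ L, Minimal (IsClosedLeftIdeal G) L ∧ U ∈ L := by
  obtain ⟨L, hLU, hL⟩ := (isClosedLeftIdeal_image_comp hU).exists_minimal
  obtain ⟨e, heL, hee⟩ := exists_idempotent_of_isClosed hL.prop.nonempty hL.prop.isClosed
    fun p hp q hq => hL.prop.comp_mem p (hL.prop.subset_envelope hp) q hq
  have heU : e ∘ U = e := by
    obtain ⟨r, -, rfl⟩ := hLU heL
    change r ∘ (U ∘ U) = r ∘ U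
    rw [hUU]
  have hUe : U ∘ e = U := by
    refine hmin (U ∘ e) (comp_mem_envelope hU (hL.prop.subset_envelope heL)) ?_ ?_ ?_
    · change U ∘ ((e ∘ U) ∘ e) = U ∘ e
      rw [heU, hee]
    · change U ∘ (e ∘ U) = U ∘ e
      rw [heU]
    · change (U ∘ U) ∘ e = U ∘ e
      rw [hUU]
  exact ⟨L, hL, hUe ▸ hL.prop.comp_mem U hU e heL⟩

theorem isGroupMinimalPoint_of_mem_minimal (hL : Minimal (IsClosedLeftIdeal G) L) {U : Z → Z}
    (hU : U ∈ L) {z : Z} (hUz : U z = z) : IsGroupMinimalPoint G z := by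
  intro y hy
  rw [closure_groupOrbit] at hy
  obtain ⟨p, hp, rfl⟩ := hy
  rw [closure_groupOrbit, closure_groupOrbit]
  apply Subset.antisymm
  · rintro _ ⟨q, hq, rfl⟩
    exact ⟨q ∘ p, comp_mem_envelope hq hp, rfl⟩
  · rintro _ ⟨q, hq, rfl⟩
    have hpU : p ∘ U ∈ L := hL.prop.comp_mem p hp U hU
    obtain ⟨s, hs, hsU⟩ := (image_comp_eq_of_minimal hL hpU).symm ▸ hU
    refine ⟨q ∘ s, comp_mem_envelope hq hs, ?_⟩
    conv_rhs => rw [← hUz, ← hsU]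
    simp only [Function.comp_apply, hUz]

end Envelope

theorem Pi.map_inj {ι α β : Type*} {f g : ι → α → β} : Pi.map f = Pi.map g ↔ f = g :=
  ⟨fun h => funext fun i => funext fun a => congrFun (congrFun h fun _ => a) i,
    congrArg Pi.map⟩

section ApplyOn

variable {ι X : Type*}

def applyOn (p : ι → Prop) [DecidablePred p] (g : X → X) : (ι → X) → (ι → X) :=
  Pi.map fun i => if p i then g else id

variable (p : ι → Prop) [DecidablePred p]

theorem applyOn_comp (g h : X → X) : applyOn p (g ∘ h) = applyOn p g ∘ applyOn p h := by
  funext w i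
  by_cases hi : p i <;> simp [applyOn, hi]

theorem applyOn_congr {q : ι → Prop} [DecidablePred q] (hpq : ∀ i, p i ↔ q i) (g : X → X) :
    applyOn p g = applyOn q g := by
  funext w i
  simp [applyOn, hpq i]

theorem applyOn_eq_id (hp : ∀ i, ¬ p i) (g : X → X) : applyOn p g = id := by
  funext w i
  simp [applyOn, hp i]

theorem applyOn_comp_applyOn_of_idempotent {q r : ι → Prop} [DecidablePred q] [DecidablePred r]
    (hr : ∀ i, r i ↔ p i ∨ q i) {g : X → X} (hg : g ∘ g = g) :
    applyOn p g ∘ applyOn q g = applyOn r g := by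
  funext w i
  have hgg := congrFun hg (w i)
  by_cases hp : p i <;> by_cases hq : q i <;> simp_all [applyOn]

theorem continuous_applyOn [TopologicalSpace X] :
    Continuous (applyOn p : (X → X) → (ι → X) → (ι → X)) := by
  refine continuous_pi fun w => continuous_pi fun i => ?_
  by_cases hi : p i
  · simpa [applyOn, hi] using continuous_apply (w i)
  · simpa [applyOn, hi] using continuous_const

variable (X) in
def piCongrRightHom [TopologicalSpace X] : (ι → (X ≃ₜ X)) →* ((ι → X) ≃ₜ (ι → X)) where
  toFun := Homeomorph.piCongrRight
  map_one' := rfl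
  map_mul' _ _ := rfl

theorem coe_piCongrRight_ite_zpow [TopologicalSpace X] (T : X ≃ₜ X) (m : ℤ) :
    ⇑(Homeomorph.piCongrRight (fun i => if p i then T else 1) ^ m) = applyOn p ⇑(T ^ m) := by
  have hpow : Homeomorph.piCongrRight (fun i => if p i then T else 1) ^ m
      = Homeomorph.piCongrRight ((fun i => if p i then T else 1) ^ m) :=
    (map_zpow (piCongrRightHom X) _ m).symm
  rw [hpow]
  funext w i
  by_cases hi : p i <;> simp [applyOn, hi]

end ApplyOn

section Cube

variable {ι X : Type*} [TopologicalSpace X] [CompactSpace X] [T2Space X]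

theorem envelope_zpowers_piCongrRight (p : ι → Prop) [DecidablePred p] (T : X ≃ₜ X) :
    envelope (Subgroup.zpowers (Homeomorph.piCongrRight fun i => if p i then T else 1))
      = applyOn p '' envelope (Subgroup.zpowers T) := by
  refine envelope_eq_image (continuous_applyOn p) ?_
  simp only [Subgroup.coe_zpowers, ← range_comp]
  exact congrArg range (funext (coe_piCongrRight_ite_zpow p T))

theorem closure_range_zpow_piCongrRight (p : ι → Prop) [DecidablePred p] (T : X ≃ₜ X)
    (w : ι → X) :
    closure (range fun m : ℤ => ((Homeomorph.piCongrRight fun i => if p i then T else 1) ^ m) w)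
      = (fun g => applyOn p g w) '' envelope (Subgroup.zpowers T) := by
  rw [range_zpow_apply_eq_groupOrbit, closure_groupOrbit, envelope_zpowers_piCongrRight,
    image_image]

theorem exists_idempotent_applyOn_eq_self (p : ι → Prop) [DecidablePred p] {T : X ≃ₜ X}
    {x : ι → X} (hx : IsMinimalPoint (Homeomorph.piCongrRight fun i => if p i then T else 1) x)
    {L : Set (X → X)} (hL : Minimal (IsClosedLeftIdeal (Subgroup.zpowers T)) L) :
    ∃ u ∈ L, u ∘ u = u ∧ applyOn p u x = x := by
  have horbit := closure_range_zpow_piCongrRight p T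
  obtain ⟨g, hg⟩ := hL.prop.nonempty
  have hgx := horbit x ▸ mem_image_of_mem (fun g => applyOn p g x) (hL.prop.subset_envelope hg)
  obtain ⟨h, hh, hhgx⟩ :
      x ∈ (fun h => applyOn p h (applyOn p g x)) '' envelope (Subgroup.zpowers T) := by
    rw [← horbit, hx _ hgx]
    exact subset_closure ⟨0, rfl⟩
  have hne : (L ∩ {u | applyOn p u x = x}).Nonempty :=
    ⟨h ∘ g, hL.prop.comp_mem h hh g hg, by rw [mem_ofPred_eq, applyOn_comp]; exact hhgx⟩
  have hclosed : IsClosed (L ∩ {u | applyOn p u x = x}) :=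
    hL.prop.isClosed.inter
      (isClosed_eq ((continuous_apply x).comp (continuous_applyOn p)) continuous_const)
  have hmul : ∀ u ∈ L ∩ {u | applyOn p u x = x}, ∀ v ∈ L ∩ {u | applyOn p u x = x},
      u ∘ v ∈ L ∩ {u | applyOn p u x = x} := by
    rintro u ⟨huL, hux⟩ v ⟨hvL, hvx⟩
    refine ⟨hL.prop.comp_mem u (hL.prop.subset_envelope huL) v hvL, ?_⟩
    rw [mem_ofPred_eq, applyOn_comp, Function.comp_apply, hvx, hux]
  obtain ⟨u, ⟨huL, hux⟩, huu⟩ := exists_idempotent_of_isClosed hne hclosed hmul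
  exact ⟨u, huL, huu, hux⟩

end Cube

section FaceGroup

variable {X : Type*} [TopologicalSpace X] {d : ℕ}

theorem idFaceHomeo_eq (T : X ≃ₜ X) (d : ℕ) :
    idFaceHomeo T d = Homeomorph.piCongrRight fun ε => if ε ≠ v0 d then T else 1 := by
  simp only [ne_eq, ite_not]
  rfl

theorem faceHomeo_eq (T : X ≃ₜ X) (j : Fin d) :
    faceHomeo T j = Homeomorph.piCongrRight fun ε => if ε j = true then T else 1 :=
  rfl

theorem envelope_faceGroup_subset [CompactSpace X] [T2Space X] (T : X ≃ₜ X) :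
    envelope (faceGroup T d) ⊆
      Pi.map '' {q | q (v0 d) = id ∧ ∀ ε, q ε ∈ envelope (Subgroup.zpowers T)} := by
  let K : Subgroup ((Fin d → Bool) → (X ≃ₜ X)) :=
    Subgroup.pi univ (fun _ => Subgroup.zpowers T) ⊓ (Pi.evalMonoidHom _ (v0 d)).ker
  have hFK : faceGroup T d ≤ K.map (piCongrRightHom X) := by
    refine Subgroup.closure_le _ |>.2 ?_
    rintro _ ⟨j, rfl⟩
    refine ⟨fun ε => if ε j = true then T else 1, Subgroup.mem_inf.2
      ⟨(Subgroup.mem_pi _).2 fun ε _ => ?_, MonoidHom.mem_ker.2 (by simp [v0])⟩, rfl⟩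
    split_ifs
    exacts [Subgroup.mem_zpowers T, one_mem _]
  refine closure_minimal ?_ (IsCompact.isClosed (IsCompact.image ?_ ?_))
  · rintro _ ⟨g, hg, rfl⟩
    obtain ⟨f, hf, rfl⟩ := hFK hg
    rw [SetLike.mem_coe, Subgroup.mem_inf, Subgroup.mem_pi, MonoidHom.mem_ker,
      Pi.evalMonoidHom_apply] at hf
    refine ⟨fun ε => f ε, ⟨?_, fun ε => coe_mem_envelope (hf.1 ε trivial)⟩, rfl⟩
    simp only [hf.2]
    rfl
  · rw [ofPred_and, ofPred_forall]
    exact ((isClosed_eq (continuous_apply _) continuous_const).inter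
      (isClosed_iInter fun ε => isClosed_closure.preimage (continuous_apply ε))).isCompact
  · exact continuous_pi fun w => continuous_pi fun ε =>
      (continuous_apply (w ε)).comp (continuous_apply ε)

theorem applyOn_mem_envelope_faceGroup [CompactSpace X] [T2Space X] {T : X ≃ₜ X} {u : X → X}
    (hu : u ∈ envelope (Subgroup.zpowers T)) (huu : u ∘ u = u) :
    applyOn (· ≠ v0 d) u ∈ envelope (faceGroup T d) := by
  have hface : ∀ j, applyOn (fun ε : Fin d → Bool => ε j = true) u ∈ envelope (faceGroup T d) :=
    fun j => envelope_mono ((Subgroup.zpowers_le (H := faceGroup T d)).2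
      (Subgroup.subset_closure (mem_range_self j)))
      (by rw [faceHomeo_eq, envelope_zpowers_piCongrRight]; exact mem_image_of_mem _ hu)
  have hunion : ∀ s : Finset (Fin d),
      applyOn (fun ε : Fin d → Bool => ∃ j ∈ s, ε j = true) u ∈ envelope (faceGroup T d) := by
    intro s
    induction s using Finset.induction_on with
    | empty =>
      rw [applyOn_eq_id _ (by simp)]
      exact id_mem_envelope _
    | insert j s _ ih =>
      rw [← applyOn_comp_applyOn_of_idempotent (fun ε => ε j = true)
        (q := fun ε => ∃ j ∈ s, ε j = true) (by simp [or_and_right, exists_or]) huu]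
      exact comp_mem_envelope (hface j) ih
  rw [applyOn_congr _ (q := fun ε : Fin d → Bool => ∃ j ∈ Finset.univ, ε j = true)
    (by simp [v0, funext_iff])]
  exact hunion Finset.univ

theorem eq_applyOn_of_idempotent [CompactSpace X] [T2Space X] {T : X ≃ₜ X} {L : Set (X → X)}
    (hL : Minimal (IsClosedLeftIdeal (Subgroup.zpowers T)) L) {u : X → X} (hu : u ∈ L)
    {e : ((Fin d → Bool) → X) → ((Fin d → Bool) → X)} (he : e ∈ envelope (faceGroup T d))
    (hee : e ∘ e = e) (heU : e ∘ applyOn (· ≠ v0 d) u = e) (hUe : applyOn (· ≠ v0 d) u ∘ e = e) :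
    e = applyOn (· ≠ v0 d) u := by
  obtain ⟨q, ⟨hq0, hqE⟩, rfl⟩ := envelope_faceGroup_subset T he
  simp only [applyOn, Pi.map_comp_map, Pi.map_inj] at hee heU hUe ⊢
  funext ε
  by_cases hε : ε = v0 d
  · simp [hε, hq0]
  · refine (eq_of_minimal_of_idempotent hL hu (hqE ε) (congrFun hee ε)
      (by simpa [hε] using congrFun heU ε) (by simpa [hε] using congrFun hUe ε)).trans ?_
    simp [hε]

end FaceGroup

theorem statement8_general {X : Type*} [MetricSpace X] [CompactSpace X]
    (T : X ≃ₜ X) (d : ℕ)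
    (x : (Fin d → Bool) → X)
    (hx : IsMinimalPoint (idFaceHomeo T d) x) :
    ∀ y ∈ closure (groupOrbit (faceGroup T d) x),
      closure (groupOrbit (faceGroup T d) y)
        = closure (groupOrbit (faceGroup T d) x) := by
  obtain ⟨L, hL⟩ := exists_minimal_isClosedLeftIdeal (Subgroup.zpowers T)
  rw [idFaceHomeo_eq] at hx
  obtain ⟨u, huL, huu, hux⟩ := exists_idempotent_applyOn_eq_self _ hx hL
  obtain ⟨I, hI, hUI⟩ := exists_minimal_mem_of_idempotent
    (applyOn_mem_envelope_faceGroup (hL.prop.subset_envelope huL) huu)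
    (by rw [← applyOn_comp, huu])
    (fun e he hee heU hUe => eq_applyOn_of_idempotent hL huL he hee heU hUe)
  exact isGroupMinimalPoint_of_mem_minimal hI hUI hux

/-- an `id × T_*^{[d]}`-minimal point of `X^{[d]}` is an
`F^{[d]}`-minimal point. -/
theorem statement8 {X : Type*} [MetricSpace X] [CompactSpace X]
    (T : X ≃ₜ X) (d : ℕ) (hd : 1 ≤ d)
    (x : (Fin d → Bool) → X)
    (hx : IsMinimalPoint (idFaceHomeo T d) x) :
    ∀ y ∈ closure (groupOrbit (faceGroup T d) x),
      closure (groupOrbit (faceGroup T d) y)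
        = closure (groupOrbit (faceGroup T d) x) :=
  statement8_general T d x hx
end
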